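/- arXiv:1205.4146 — 2 statements merged into one kernel-verified Lean document; each statement's English description precedes it below -/
import Mathlib

section
/- Let a ≥ 1, b > 0 and x ∈ (0,1) with x > (a−1)/(a+b). Then (1−x)^b x^{a−1} / (B(a,b) b) ≤ P[B_{a,b} > x] ≤ (1−x)^b x^{a−1} (1 + L(a,b,x)) / (B(a,b) b). -/
open Real Set MeasureTheory intervalIntegral

/-!
With `f(t) = t^(a-1) (1-t)^(b-1)` and `G(t) = -t^(a-1) (1-t)^b / b`, both `G` and
`G · (1 + L(a,b,·))` vanish at `1`, and for `a ≥ 1` their derivatives are `f` times a factor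
`≤ 1`, resp. `≥ 1` (the latter where `1 - a + (a+b)t > 0`, i.e. on `(x,1)`). Comparing integrals
over `[x,1]` squeezes `∫_x^1 f` between `-G(x)` and `-G(x) (1 + L(a,b,x))`.
-/

theorem hasDerivAt_rpow_mul_one_sub_rpow (p q : ℝ) {t : ℝ} (ht0 : 0 < t) (ht1 : t < 1) :
    HasDerivAt (fun s => s ^ p * (1 - s) ^ q)
      (t ^ p * (1 - t) ^ q * (p / t - q / (1 - t))) t := by
  have ht1' : 1 - t ≠ 0 := by linarith
  have hq : HasDerivAt (fun s => (1 - s) ^ q) (q * (1 - t) ^ (q - 1) * (-1)) t :=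
    (hasDerivAt_rpow_const (Or.inl ht1')).comp t ((hasDerivAt_id t).const_sub 1)
  refine ((hasDerivAt_rpow_const (p := p) (Or.inl ht0.ne')).mul hq).congr_deriv ?_
  rw [rpow_sub_one ht0.ne', rpow_sub_one ht1']
  ring

theorem integrableOn_rpow_mul_one_sub_rpow (c : ℝ) {b x : ℝ} (hb : 0 < b) (hx0 : 0 < x) :
    IntegrableOn (fun t => t ^ c * (1 - t) ^ (b - 1)) (Icc x 1) := by
  rcases le_or_gt x 1 with hx1 | hx1
  swap
  · simp [Icc_eq_empty_of_lt hx1]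
  rw [← intervalIntegrable_iff_integrableOn_Icc_of_le hx1]
  have hpow : IntervalIntegrable (fun t : ℝ => (1 - t) ^ (b - 1)) volume x 1 := by
    simpa using (intervalIntegrable_rpow' (a := 0) (b := 1 - x)
      (r := b - 1) (by linarith)).comp_sub_left 1 |>.symm
  refine hpow.continuousOn_mul (ContinuousOn.rpow_const continuousOn_id fun t ht => ?_)
  rw [uIcc_of_le hx1] at ht
  exact Or.inl (hx0.trans_le ht.1).ne'

section

variable {a b : ℝ}

theorem hasDerivAt_beta_tail_lower_antideriv (hb : b ≠ 0) {t : ℝ} (ht0 : 0 < t) (ht1 : t < 1) :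
    HasDerivAt (fun s => -(s ^ (a - 1) * (1 - s) ^ b) / b)
      (t ^ (a - 1) * (1 - t) ^ (b - 1) * (1 - (a - 1) * (1 - t) / (b * t))) t := by
  have ht1' : 1 - t ≠ 0 := by linarith
  refine (((hasDerivAt_rpow_mul_one_sub_rpow (a - 1) b ht0 ht1).neg).div_const b).congr_deriv ?_
  rw [rpow_sub_one ht1']
  field_simp
  ring

theorem hasDerivAt_beta_tail_upper_antideriv (hb : b ≠ 0) {t : ℝ} (ht0 : 0 < t) (ht1 : t < 1)
    (hD : 0 < 1 - a + (a + b) * t) :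
    HasDerivAt (fun s => -(s ^ (a - 1) * (1 - s) ^ b) / b *
        (1 + (a - 1) * (1 - s) / (1 - a + (a + b) * s)))
      (t ^ (a - 1) * (1 - t) ^ (b - 1) *
        (1 + (a - 1) * (a + b) * (1 - t) ^ 2 / (b * (1 - a + (a + b) * t) ^ 2))) t := by
  have ht1' : 1 - t ≠ 0 := by linarith
  have hL : HasDerivAt (fun s => 1 + (a - 1) * (1 - s) / (1 - a + (a + b) * s))
      (((a - 1) * (-1) * (1 - a + (a + b) * t) - (a - 1) * (1 - t) * (a + b)) /
        (1 - a + (a + b) * t) ^ 2) t := by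
    refine ((((hasDerivAt_id t).const_sub 1).const_mul (a - 1)).div ?_ hD.ne').const_add 1
    simpa using ((hasDerivAt_id t).const_mul (a + b)).const_add (1 - a)
  refine ((hasDerivAt_beta_tail_lower_antideriv (a := a) hb ht0 ht1).mul hL).congr_deriv ?_
  have hD' : 1 - a + t * (a + b) ≠ 0 := by rw [mul_comm]; exact hD.ne'
  rw [rpow_sub_one ht1' b]
  field_simp
  ring

theorem continuousOn_rpow_mul_one_sub_rpow (p : ℝ) {q x : ℝ} (hq : 0 ≤ q) (hx0 : 0 < x) :
    ContinuousOn (fun s => s ^ p * (1 - s) ^ q) (Ici x) :=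
  (continuousOn_id.rpow_const fun _ hs => Or.inl (hx0.trans_le hs).ne').mul
    ((continuousOn_const.sub continuousOn_id).rpow_const fun _ _ => Or.inr hq)

variable {x : ℝ}

theorem rpow_mul_one_sub_rpow_div_le_integral (ha : 1 ≤ a) (hb : 0 < b) (hx0 : 0 < x)
    (hx1 : x < 1) :
    x ^ (a - 1) * (1 - x) ^ b / b ≤ ∫ t in x..1, t ^ (a - 1) * (1 - t) ^ (b - 1) := by
  have hcont : ContinuousOn (fun s => -(s ^ (a - 1) * (1 - s) ^ b) / b) (Icc x 1) :=
    ((continuousOn_rpow_mul_one_sub_rpow (a - 1) hb.le hx0).neg.div_const b).mono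
      Icc_subset_Ici_self
  have h := sub_le_integral_of_hasDeriv_right_of_le hx1.le hcont
    (fun t ht =>
      (hasDerivAt_beta_tail_lower_antideriv hb.ne' (hx0.trans ht.1) ht.2).hasDerivWithinAt)
    (integrableOn_rpow_mul_one_sub_rpow (a - 1) hb hx0) fun t ht => by
      have ht0 : 0 < t := hx0.trans ht.1
      have ht1 : 0 < 1 - t := sub_pos.2 ht.2
      refine mul_le_of_le_one_right (by positivity) (sub_le_self _ ?_)
      exact div_nonneg (mul_nonneg (sub_nonneg.2 ha) ht1.le) (by positivity)
  simpa [zero_rpow hb.ne', neg_div] using h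

theorem integral_rpow_mul_one_sub_rpow_le (ha : 1 ≤ a) (hb : 0 < b) (hx0 : 0 < x) (hx1 : x < 1)
    (hx : a - 1 < (a + b) * x) :
    ∫ t in x..1, t ^ (a - 1) * (1 - t) ^ (b - 1) ≤
      x ^ (a - 1) * (1 - x) ^ b * (1 + (a - 1) * (1 - x) / (1 - a + (a + b) * x)) / b := by
  have hD : ∀ t ∈ Ici x, 0 < 1 - a + (a + b) * t := fun t ht => by
    nlinarith [mem_Ici.1 ht]
  have hcont : ContinuousOn (fun s => -(s ^ (a - 1) * (1 - s) ^ b) / b *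
      (1 + (a - 1) * (1 - s) / (1 - a + (a + b) * s))) (Icc x 1) := by
    refine (((continuousOn_rpow_mul_one_sub_rpow (a - 1) hb.le hx0).neg.div_const b).mul
      (continuousOn_const.add ((continuousOn_const.mul (continuousOn_const.sub continuousOn_id)).div
        (continuousOn_const.add (continuousOn_const.mul continuousOn_id))
        fun t ht => (hD t ht).ne'))).mono Icc_subset_Ici_self
  have h := integral_le_sub_of_hasDeriv_right_of_le hx1.le hcont
    (fun t ht => (hasDerivAt_beta_tail_upper_antideriv hb.ne' (hx0.trans ht.1) ht.2
      (hD t ht.1.le)).hasDerivWithinAt)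
    (integrableOn_rpow_mul_one_sub_rpow (a - 1) hb hx0) fun t ht => by
      have ht0 : 0 < t := hx0.trans ht.1
      have ht1 : 0 < 1 - t := sub_pos.2 ht.2
      have hab : 0 ≤ (a - 1) * (a + b) := mul_nonneg (sub_nonneg.2 ha) (by linarith)
      exact le_mul_of_one_le_right (by positivity) (le_add_of_nonneg_right (by positivity))
  convert h using 1
  simp only [one_rpow, sub_self, zero_rpow hb.ne', mul_zero, neg_zero, zero_div, mul_one, add_zero,
    zero_sub]
  ring

end

/-- Lemma 1, case `a ≥ 1`: bounds for the tail of the Beta(a,b) distribution.  For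
`x ∈ (0,1)` with `x > (a−1)/(a+b)`,
`(1−x)^b x^{a−1}/(B(a,b)b) ≤ P[B_{a,b} > x] ≤ (1−x)^b x^{a−1}(1 + L(a,b,x))/(B(a,b)b)`,
where `B(a,b) = Γ(a)Γ(b)/Γ(a+b)`, `P[B_{a,b} > x] = (1/B(a,b)) ∫_x^1 t^{a−1}(1−t)^{b−1} dt`
and `L(a,b,x) = (a−1)(1−x)/(1 − a + (a+b)x)`. -/
theorem beta_tail_bounds_of_one_le (a b x : ℝ) (ha : 1 ≤ a) (hb : 0 < b)
    (hx0 : 0 < x) (hx1 : x < 1) (hx : (a - 1) / (a + b) < x) :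
    (1 - x) ^ b * x ^ (a - 1) / ((Gamma a * Gamma b / Gamma (a + b)) * b) ≤
      (1 / (Gamma a * Gamma b / Gamma (a + b))) * ∫ t in x..1, t ^ (a - 1) * (1 - t) ^ (b - 1) ∧
    (1 / (Gamma a * Gamma b / Gamma (a + b))) * (∫ t in x..1, t ^ (a - 1) * (1 - t) ^ (b - 1)) ≤
      (1 - x) ^ b * x ^ (a - 1) * (1 + (a - 1) * (1 - x) / (1 - a + (a + b) * x)) /
        ((Gamma a * Gamma b / Gamma (a + b)) * b) := by
  have hab : 0 < a + b := by linarith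
  have hB : 0 < Gamma a * Gamma b / Gamma (a + b) :=
    div_pos (mul_pos (Gamma_pos_of_pos (by linarith)) (Gamma_pos_of_pos hb)) (Gamma_pos_of_pos hab)
  have hx' : a - 1 < (a + b) * x := by
    rw [div_lt_iff₀ hab] at hx
    linarith
  constructor
  · calc _ = 1 / (Gamma a * Gamma b / Gamma (a + b)) * (x ^ (a - 1) * (1 - x) ^ b / b) := by ring
      _ ≤ _ := by gcongr; exact rpow_mul_one_sub_rpow_div_le_integral ha hb hx0 hx1
  · calc _ ≤ 1 / (Gamma a * Gamma b / Gamma (a + b)) * (x ^ (a - 1) * (1 - x) ^ b *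
          (1 + (a - 1) * (1 - x) / (1 - a + (a + b) * x)) / b) := by
          gcongr; exact integral_rpow_mul_one_sub_rpow_le ha hb hx0 hx1 hx'
      _ = _ := by ring
end

section
/- Let 0 < a < 1, b > 0 and x ∈ (0,1) with x > (a−1)/(a+b). Then (1−x)^b x^{a−1} (1 + L(a,b,x)) / (B(a,b) b) ≤ P[B_{a,b} > x] ≤ (1−x)^b x^{a−1} / (B(a,b) b). -/
/-!
The upper bound follows from `t^(a-1) ≤ x^(a-1)` on `[x, 1]` (as `a ≤ 1`) and
`∫_x^1 (1 - t)^(b-1) dt = (1 - x)^b / b`.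

For the lower bound, with `D t = 1 - a + (a + b) t` and `G t = t^a (1 - t)^b / D t`, one has
`f t + (b + 1)/b · G' t = f t · (a + b)(1 - a)(1 - t)^2 / (b (D t)^2) ≥ 0` for the integrand
`f t = t^(a-1) (1 - t)^(b-1)`, so `∫_x^1 f ≥ (b + 1)/b · (G x - G 1) = (b + 1)/b · G x`, and
`(b + 1)/b · G x` is the claimed lower bound since `D x + (a - 1)(1 - x) = (b + 1) x`.
-/

open Real MeasureTheory Set intervalIntegral

section BetaIntegrand

variable {a b x : ℝ}

theorem integral_one_sub_rpow_sub_one (hb : 0 < b) (x : ℝ) :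
    ∫ t in x..1, (1 - t) ^ (b - 1) = (1 - x) ^ b / b := by
  rw [integral_comp_sub_left (fun u : ℝ => u ^ (b - 1)) 1, sub_self,
    integral_rpow (Or.inl (by linarith)), sub_add_cancel, zero_rpow hb.ne', sub_zero]

theorem intervalIntegrable_one_sub_rpow_sub_one (hb : 0 < b) (x : ℝ) :
    IntervalIntegrable (fun t : ℝ => (1 - t) ^ (b - 1)) volume x 1 := by
  simpa using ((intervalIntegrable_rpow' (a := 0) (b := 1 - x) (by linarith)).comp_sub_left 1).symm

theorem intervalIntegrable_beta_integrand (hb : 0 < b) (hx0 : 0 < x) :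
    IntervalIntegrable (fun t => t ^ (a - 1) * (1 - t) ^ (b - 1)) volume x 1 :=
  (intervalIntegrable_one_sub_rpow_sub_one hb x).continuousOn_mul <|
    continuousOn_id.rpow_const fun _ ht => Or.inl ((lt_min hx0 one_pos).trans_le ht.1).ne'

theorem integral_beta_integrand_le (ha : a ≤ 1) (hb : 0 < b) (hx0 : 0 < x) (hx1 : x ≤ 1) :
    ∫ t in x..1, t ^ (a - 1) * (1 - t) ^ (b - 1) ≤ (1 - x) ^ b * x ^ (a - 1) / b :=
  calc ∫ t in x..1, t ^ (a - 1) * (1 - t) ^ (b - 1)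
      ≤ ∫ t in x..1, x ^ (a - 1) * (1 - t) ^ (b - 1) := by
        refine integral_mono_on hx1 (intervalIntegrable_beta_integrand hb hx0)
          ((intervalIntegrable_one_sub_rpow_sub_one hb x).const_mul _) fun t ht => ?_
        exact mul_le_mul_of_nonneg_right (rpow_le_rpow_of_nonpos hx0 ht.1 (by linarith))
          (rpow_nonneg (by linarith [ht.2]) _)
    _ = (1 - x) ^ b * x ^ (a - 1) / b := by
        rw [intervalIntegral.integral_const_mul, integral_one_sub_rpow_sub_one hb]
        ring

theorem hasDerivAt_beta_minorant {t : ℝ} (hb : b ≠ 0) (ht0 : 0 < t) (ht1 : t < 1)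
    (hD : 1 - a + (a + b) * t ≠ 0) :
    HasDerivAt (fun s => -((b + 1) / b) * (s ^ a * (1 - s) ^ b / (1 - a + (a + b) * s)))
      (t ^ (a - 1) * (1 - t) ^ (b - 1) *
        (1 - (a + b) * (1 - a) * (1 - t) ^ 2 / (b * (1 - a + (a + b) * t) ^ 2))) t := by
  have h1t : 1 - t ≠ 0 := sub_ne_zero.2 ht1.ne'
  have hpow : HasDerivAt (fun s => s ^ a) (a * t ^ (a - 1)) t :=
    hasDerivAt_rpow_const (Or.inl ht0.ne')
  have hpow' : HasDerivAt (fun s => (1 - s) ^ b) (-(b * (1 - t) ^ (b - 1))) t := by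
    simpa using ((hasDerivAt_id t).const_sub 1).rpow_const (p := b) (Or.inl h1t)
  have hlin : HasDerivAt (fun s => 1 - a + (a + b) * s) (a + b) t := by
    simpa using ((hasDerivAt_id t).const_mul (a + b)).const_add (1 - a)
  refine (((hpow.fun_mul hpow').fun_div hlin hD).const_mul _).congr_deriv ?_
  rw [rpow_sub_one ht0.ne', rpow_sub_one h1t]
  generalize hd : 1 - a + (a + b) * t = d at hD ⊢
  field_simp
  subst hd
  ring

theorem le_integral_beta_integrand (ha : a ≤ 1) (hab : 0 ≤ a + b) (hb : 0 < b) (hx0 : 0 < x)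
    (hx1 : x ≤ 1) (hD : 0 < 1 - a + (a + b) * x) :
    (1 - x) ^ b * x ^ (a - 1) * (1 + (a - 1) * (1 - x) / (1 - a + (a + b) * x)) / b ≤
      ∫ t in x..1, t ^ (a - 1) * (1 - t) ^ (b - 1) := by
  set G : ℝ → ℝ := fun s => s ^ a * (1 - s) ^ b / (1 - a + (a + b) * s) with hG
  have hD_pos : ∀ t ∈ Icc x 1, 0 < 1 - a + (a + b) * t := fun t ht => by nlinarith [ht.1]
  have hG_cont : ContinuousOn G (Icc x 1) := by
    refine ContinuousOn.div ?_ (by fun_prop) fun t ht => (hD_pos t ht).ne'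
    exact (continuousOn_id.rpow_const fun t ht => Or.inl (hx0.trans_le ht.1).ne').mul
      ((continuousOn_const.sub continuousOn_id).rpow_const fun _ _ => Or.inr hb.le)
  have hderiv_le : ∀ t ∈ Ioo x 1, t ^ (a - 1) * (1 - t) ^ (b - 1) *
      (1 - (a + b) * (1 - a) * (1 - t) ^ 2 / (b * (1 - a + (a + b) * t) ^ 2)) ≤
        t ^ (a - 1) * (1 - t) ^ (b - 1) := fun t ht =>
    mul_le_of_le_one_right
      (mul_nonneg (rpow_nonneg (hx0.trans ht.1).le _) (rpow_nonneg (by linarith [ht.2]) _))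
      (sub_le_self _ (div_nonneg (mul_nonneg (mul_nonneg hab (sub_nonneg.2 ha)) (sq_nonneg _))
        (by positivity)))
  have hFTC := sub_le_integral_of_hasDeriv_right_of_le hx1 (continuousOn_const.mul hG_cont)
    (fun t ht => (hasDerivAt_beta_minorant hb.ne' (hx0.trans ht.1) ht.2
      (hD_pos t (Ioo_subset_Icc_self ht)).ne').hasDerivWithinAt)
    ((intervalIntegrable_iff_integrableOn_Icc_of_le hx1).1
      (intervalIntegrable_beta_integrand hb hx0)) hderiv_le
  have hG_one : G 1 = 0 := by simp [hG, zero_rpow hb.ne']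
  have hG_x : (1 - x) ^ b * x ^ (a - 1) * (1 + (a - 1) * (1 - x) / (1 - a + (a + b) * x)) / b =
      (b + 1) / b * G x := by
    simp only [hG]
    rw [one_add_div hD.ne', show 1 - a + (a + b) * x + (a - 1) * (1 - x) = (b + 1) * x by ring,
      rpow_sub_one hx0.ne']
    generalize 1 - a + (a + b) * x = d at hD ⊢
    field_simp
  simp only [Pi.mul_apply, hG_one] at hFTC
  linarith

end BetaIntegrand

/-- Lemma 1, case `a < 1`: bounds for the tail of the Beta(a,b) distribution.  For
`x ∈ (0,1)` with `x > (a−1)/(a+b)`,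
`(1−x)^b x^{a−1}(1 + L(a,b,x))/(B(a,b)b) ≤ P[B_{a,b} > x] ≤ (1−x)^b x^{a−1}/(B(a,b)b)`,
where `B(a,b) = Γ(a)Γ(b)/Γ(a+b)`, `P[B_{a,b} > x] = (1/B(a,b)) ∫_x^1 t^{a−1}(1−t)^{b−1} dt`
and `L(a,b,x) = (a−1)(1−x)/(1 − a + (a+b)x)`. -/
theorem beta_tail_bounds_of_lt_one (a b x : ℝ) (ha0 : 0 < a) (ha : a < 1) (hb : 0 < b)
    (hx0 : 0 < x) (hx1 : x < 1) (hx : (a - 1) / (a + b) < x) :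
    (1 - x) ^ b * x ^ (a - 1) * (1 + (a - 1) * (1 - x) / (1 - a + (a + b) * x)) /
        ((Gamma a * Gamma b / Gamma (a + b)) * b) ≤
      (1 / (Gamma a * Gamma b / Gamma (a + b))) * ∫ t in x..1, t ^ (a - 1) * (1 - t) ^ (b - 1) ∧
    (1 / (Gamma a * Gamma b / Gamma (a + b))) * (∫ t in x..1, t ^ (a - 1) * (1 - t) ^ (b - 1)) ≤
      (1 - x) ^ b * x ^ (a - 1) / ((Gamma a * Gamma b / Gamma (a + b)) * b) := by
  have hab : 0 < a + b := by linarith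
  have hD : 0 < 1 - a + (a + b) * x := by
    have := (div_lt_iff₀ hab).1 hx
    linarith
  set B := Gamma a * Gamma b / Gamma (a + b)
  have hB : 0 < B :=
    div_pos (mul_pos (Gamma_pos_of_pos ha0) (Gamma_pos_of_pos hb)) (Gamma_pos_of_pos hab)
  rw [mul_comm B b, ← div_div, ← div_div, one_div_mul_eq_div]
  constructor
  · exact div_le_div_of_nonneg_right
      (le_integral_beta_integrand ha.le hab.le hb hx0 hx1.le hD) hB.le
  · exact div_le_div_of_nonneg_right (integral_beta_integrand_le ha.le hb hx0 hx1.le) hB.le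
end
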